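/- Let n ≥ 1, let x_1, …, x_n ∈ H, let μ ∈ H, and for 1 ≤ m ≤ n set x̄_m = (1/m) ∑_{i=1}^m x_i. Then max_{1 ≤ m ≤ n} ‖(1/√n) ∑_{i=1}^m [(x_i − μ) ⊗ (x_i − μ) − (x_i − x̄_n) ⊗ (x_i − x̄_n)]‖_HS ≤ 3 · (max_{1 ≤ m ≤ n} (m/√n) · ‖x̄_m − μ‖) · ‖x̄_n − μ‖. -/

import Mathlib

/-!
Write `yᵢ = xᵢ - μ` and `d = x̄ₙ - μ`, so that `xᵢ - x̄ₙ = yᵢ - d`. Expanding the rank-one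
operators bilinearly, the partial sum over `i < m` collapses to `A ⊗ d + d ⊗ A - m (d ⊗ d)` with
`A = ∑ yᵢ = m (x̄ₘ - μ)`. The Hilbert–Schmidt norm of a rank-one operator is `‖x‖ ‖y‖`, so the
triangle inequality bounds the scaled sum by `2 (m/√n) ‖x̄ₘ - μ‖ ‖d‖ + (m/√n) ‖d‖ ‖d‖`, and both
`(m/√n) ‖x̄ₘ - μ‖` and `(m/√n) ‖d‖ ≤ (n/√n) ‖x̄ₙ - μ‖` are at most the maximum.
-/

open RealInnerProductSpace Finset

/-- The rank-one (tensor product) operator `x ⊗ y : H → H`, `z ↦ ⟨x, z⟩ • y`. -/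
noncomputable def rankOne {H : Type*} [NormedAddCommGroup H] [InnerProductSpace ℝ H]
    (x y : H) : H →L[ℝ] H :=
  (innerSL ℝ x).smulRight y

section

variable {H : Type*} [NormedAddCommGroup H] [InnerProductSpace ℝ H]

theorem rankOne_apply (x y z : H) : rankOne x y z = ⟪x, z⟫ • y := rfl

theorem sum_rankOne_sub_rankOne_sub (y : ℕ → H) (d : H) (m : ℕ) :
    ∑ i ∈ range m, (rankOne (y i) (y i) - rankOne (y i - d) (y i - d))
      = rankOne (∑ i ∈ range m, y i) d + rankOne d (∑ i ∈ range m, y i)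
        - (m : ℝ) • rankOne d d := by
  ext z
  have hterm : ∀ i, (rankOne (y i) (y i) - rankOne (y i - d) (y i - d)) z
      = ⟪y i, z⟫ • d + ⟪d, z⟫ • y i - ⟪d, z⟫ • d := by
    intro i
    simp only [sub_apply, rankOne_apply, inner_sub_left]
    module
  rw [_root_.sum_apply, sum_congr rfl fun i _ => hterm i]
  simp only [sub_apply, add_apply, smul_apply, rankOne_apply, sum_sub_distrib, sum_add_distrib,
    sum_inner, sum_smul, smul_sum, sum_const, card_range, Nat.cast_smul_eq_nsmul]

namespace HilbertBasis

variable {ι : Type*} (b : HilbertBasis ι ℝ H)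

def IsHilbertSchmidt (T : H →L[ℝ] H) : Prop := Memℓp (fun j => T (b j)) 2

/-- The Hilbert–Schmidt norm of `T` in the basis `b`; its value is junk (`0`) unless
`b.IsHilbertSchmidt T`. -/
noncomputable def hsNorm (T : H →L[ℝ] H) : ℝ := √(∑' j, ‖T (b j)‖ ^ 2)

variable {b}

theorem IsHilbertSchmidt.add {S T : H →L[ℝ] H} (hS : b.IsHilbertSchmidt S)
    (hT : b.IsHilbertSchmidt T) : b.IsHilbertSchmidt (S + T) := by
  simpa only [IsHilbertSchmidt, add_apply, Pi.add_def] using Memℓp.add hS hT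

theorem IsHilbertSchmidt.sub {S T : H →L[ℝ] H} (hS : b.IsHilbertSchmidt S)
    (hT : b.IsHilbertSchmidt T) : b.IsHilbertSchmidt (S - T) := by
  simpa only [IsHilbertSchmidt, sub_apply, Pi.sub_def] using Memℓp.sub hS hT

theorem IsHilbertSchmidt.const_smul {T : H →L[ℝ] H} (hT : b.IsHilbertSchmidt T) (c : ℝ) :
    b.IsHilbertSchmidt (c • T) := by
  simpa only [IsHilbertSchmidt, smul_apply, Pi.smul_def] using Memℓp.const_smul hT c

theorem hsNorm_eq_norm_lp {T : H →L[ℝ] H} (hT : b.IsHilbertSchmidt T) :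
    b.hsNorm T = ‖(⟨_, hT⟩ : lp (fun _ : ι => H) 2)‖ := by
  rw [lp.norm_eq_tsum_rpow (by norm_num), hsNorm, Real.sqrt_eq_rpow]
  norm_num

theorem hsNorm_add_le {S T : H →L[ℝ] H} (hS : b.IsHilbertSchmidt S)
    (hT : b.IsHilbertSchmidt T) : b.hsNorm (S + T) ≤ b.hsNorm S + b.hsNorm T := by
  have hsum : (⟨_, hS.add hT⟩ : lp (fun _ : ι => H) 2) = ⟨_, hS⟩ + ⟨_, hT⟩ := by
    ext j
    simp only [add_apply, lp.coeFn_add, Pi.add_apply]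
  rw [hsNorm_eq_norm_lp (hS.add hT), hsum, hsNorm_eq_norm_lp hS, hsNorm_eq_norm_lp hT]
  exact norm_add_le _ _

theorem hsNorm_sub_le {S T : H →L[ℝ] H} (hS : b.IsHilbertSchmidt S)
    (hT : b.IsHilbertSchmidt T) : b.hsNorm (S - T) ≤ b.hsNorm S + b.hsNorm T := by
  have hdiff : (⟨_, hS.sub hT⟩ : lp (fun _ : ι => H) 2) = ⟨_, hS⟩ - ⟨_, hT⟩ := by
    ext j
    simp only [sub_apply, lp.coeFn_sub, Pi.sub_apply]
  rw [hsNorm_eq_norm_lp (hS.sub hT), hdiff, hsNorm_eq_norm_lp hS, hsNorm_eq_norm_lp hT]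
  exact norm_sub_le _ _

variable (b)

theorem hsNorm_smul (c : ℝ) (T : H →L[ℝ] H) : b.hsNorm (c • T) = |c| * b.hsNorm T := by
  simp only [hsNorm, smul_apply, norm_smul, mul_pow, tsum_mul_left,
    Real.sqrt_mul (sq_nonneg _), Real.norm_eq_abs, Real.sqrt_sq_eq_abs, abs_abs]

theorem hasSum_norm_rankOne_apply_sq (x y : H) :
    HasSum (fun j => ‖rankOne x y (b j)‖ ^ 2) (‖x‖ ^ 2 * ‖y‖ ^ 2) := by
  have h := (b.hasSum_inner_mul_inner x x).mul_right (‖y‖ ^ 2)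
  rw [real_inner_self_eq_norm_sq] at h
  refine h.congr_fun fun j => ?_
  rw [rankOne_apply, norm_smul, mul_pow, Real.norm_eq_abs, sq_abs, sq, real_inner_comm x]

theorem isHilbertSchmidt_rankOne (x y : H) : b.IsHilbertSchmidt (rankOne x y) :=
  memℓp_gen (by simpa using (b.hasSum_norm_rankOne_apply_sq x y).summable)

theorem hsNorm_rankOne (x y : H) : b.hsNorm (rankOne x y) = ‖x‖ * ‖y‖ := by
  rw [hsNorm, (b.hasSum_norm_rankOne_apply_sq x y).tsum_eq, ← mul_pow,
    Real.sqrt_sq (by positivity)]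

theorem hsNorm_rankOne_add_rankOne_sub_smul_le (a d : H) (c : ℝ) :
    b.hsNorm (rankOne a d + rankOne d a - c • rankOne d d)
      ≤ 2 * ‖a‖ * ‖d‖ + |c| * ‖d‖ ^ 2 := by
  have had := b.isHilbertSchmidt_rankOne a d
  have hda := b.isHilbertSchmidt_rankOne d a
  have hdd := (b.isHilbertSchmidt_rankOne d d).const_smul c
  calc b.hsNorm (rankOne a d + rankOne d a - c • rankOne d d)
      ≤ b.hsNorm (rankOne a d + rankOne d a) + b.hsNorm (c • rankOne d d) :=
        hsNorm_sub_le (had.add hda) hdd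
    _ ≤ b.hsNorm (rankOne a d) + b.hsNorm (rankOne d a) + b.hsNorm (c • rankOne d d) := by
        gcongr
        exact hsNorm_add_le had hda
    _ = 2 * ‖a‖ * ‖d‖ + |c| * ‖d‖ ^ 2 := by
        rw [hsNorm_smul, hsNorm_rankOne, hsNorm_rankOne, hsNorm_rankOne]
        ring

end HilbertBasis

theorem sum_range_sub_eq_smul_mean_sub (x : ℕ → H) (μ : H) {m : ℕ} (hm : m ≠ 0) :
    ∑ i ∈ range m, (x i - μ) = (m : ℝ) • ((m : ℝ)⁻¹ • ∑ i ∈ range m, x i - μ) := by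
  rw [smul_sub, smul_inv_smul₀ (Nat.cast_ne_zero.mpr hm), sum_sub_distrib, sum_const,
    card_range, Nat.cast_smul_eq_nsmul]

end

theorem maximal_centering_bound_general {H : Type*} [NormedAddCommGroup H]
    [InnerProductSpace ℝ H] {ι : Type*} (b : HilbertBasis ι ℝ H)
    (n : ℕ) (hn : 1 ≤ n) (x : ℕ → H) (μ : H) (xbar : ℕ → H)
    (hxbar : ∀ m, xbar m = (m : ℝ)⁻¹ • ∑ i ∈ Finset.range m, x i) :
    (Finset.Icc 1 n).sup' (Finset.nonempty_Icc.mpr hn) (fun m =>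
        Real.sqrt (∑' j, ‖((1 / Real.sqrt n) • ∑ i ∈ Finset.range m,
          (rankOne (x i - μ) (x i - μ)
            - rankOne (x i - xbar n) (x i - xbar n))) (b j)‖ ^ 2))
      ≤ 3 * ((Finset.Icc 1 n).sup' (Finset.nonempty_Icc.mpr hn) (fun m =>
          ((m : ℝ) / Real.sqrt n) * ‖xbar m - μ‖)) * ‖xbar n - μ‖ := by
  set M := (Icc 1 n).sup' (nonempty_Icc.mpr hn) fun m => ((m : ℝ) / √n) * ‖xbar m - μ‖
  have hM : ∀ m ∈ Icc 1 n, ((m : ℝ) / √n) * ‖xbar m - μ‖ ≤ M := fun m hm =>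
    le_sup' (fun m : ℕ => ((m : ℝ) / √n) * ‖xbar m - μ‖) hm
  have hsn : 0 < √(n : ℝ) := Real.sqrt_pos.mpr (by exact_mod_cast hn)
  set d := xbar n - μ
  have hcentred : ∀ i, x i - xbar n = (x i - μ) - d := fun i =>
    (sub_sub_sub_cancel_right _ _ μ).symm
  refine sup'_le _ _ fun m hm => ?_
  obtain ⟨hm1, hmn⟩ := mem_Icc.mp hm
  have hA : ∑ i ∈ range m, (x i - μ) = (m : ℝ) • (xbar m - μ) := by
    rw [hxbar m]; exact sum_range_sub_eq_smul_mean_sub x μ (by omega)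
  have hmd : ((m : ℝ) / √n) * ‖d‖ ≤ M :=
    le_trans (by gcongr) (hM n (mem_Icc.mpr ⟨hn, le_rfl⟩))
  change b.hsNorm _ ≤ _
  simp only [hcentred]
  rw [sum_rankOne_sub_rankOne_sub, hA, b.hsNorm_smul]
  calc |1 / √n| * b.hsNorm (rankOne ((m : ℝ) • (xbar m - μ)) d
        + rankOne d ((m : ℝ) • (xbar m - μ)) - (m : ℝ) • rankOne d d)
      ≤ |1 / √n| * (2 * ‖(m : ℝ) • (xbar m - μ)‖ * ‖d‖ + |(m : ℝ)| * ‖d‖ ^ 2) := by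
        gcongr; exact b.hsNorm_rankOne_add_rankOne_sub_smul_le _ _ _
    _ = 2 * ((m / √n) * ‖xbar m - μ‖) * ‖d‖ + ((m / √n) * ‖d‖) * ‖d‖ := by
        rw [norm_smul, Real.norm_natCast, Nat.abs_cast, abs_of_pos (by positivity)]
        field_simp
    _ ≤ 2 * M * ‖d‖ + M * ‖d‖ := by gcongr; exact hM m hm
    _ = 3 * M * ‖d‖ := by ring

/-- Deterministic maximal bound: the maximum over `1 ≤ m ≤ n` of the Hilbert–Schmidt
norm of `(1/√n) ∑_{i=1}^m [(x_i − μ)⊗(x_i − μ) − (x_i − x̄_n)⊗(x_i − x̄_n)]` is at most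
`3 · (max_{1 ≤ m ≤ n} (m/√n) ‖x̄_m − μ‖) · ‖x̄_n − μ‖`. -/
theorem maximal_centering_bound {H : Type*} [NormedAddCommGroup H]
    [InnerProductSpace ℝ H] [CompleteSpace H] {ι : Type*} (b : HilbertBasis ι ℝ H)
    (n : ℕ) (hn : 1 ≤ n) (x : ℕ → H) (μ : H) (xbar : ℕ → H)
    (hxbar : ∀ m, xbar m = (m : ℝ)⁻¹ • ∑ i ∈ Finset.range m, x i) :
    (Finset.Icc 1 n).sup' (Finset.nonempty_Icc.mpr hn) (fun m =>
        Real.sqrt (∑' j, ‖((1 / Real.sqrt n) • ∑ i ∈ Finset.range m,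
          (rankOne (x i - μ) (x i - μ)
            - rankOne (x i - xbar n) (x i - xbar n))) (b j)‖ ^ 2))
      ≤ 3 * ((Finset.Icc 1 n).sup' (Finset.nonempty_Icc.mpr hn) (fun m =>
          ((m : ℝ) / Real.sqrt n) * ‖xbar m - μ‖)) * ‖xbar n - μ‖ :=
  maximal_centering_bound_general b n hn x μ xbar hxbar
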